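/- arXiv:0905.0294 — 4 statements merged into one kernel-verified Lean document; each statement's English description precedes it below -/
import Mathlib

section
/- For every real x ≥ 1, the Mertens function satisfies M(x) = 2·M(√x) − Σ_{i=1}^{⌊√x⌋} Σ_{j=1}^{⌊√x⌋} μ(i)·μ(j)·⌊x/(i·j)⌋. -/
open ArithmeticFunction Finset

noncomputable def Mertens (x : ℝ) : ℤ := ∑ k ∈ Finset.Icc 1 ⌊x⌋₊, moebius k

noncomputable def Nplus (x : ℝ) : ℕ := ((Finset.Icc 1 ⌊x⌋₊).filter (fun n => moebius n = 1)).card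

noncomputable def Nminus (x : ℝ) : ℕ := ((Finset.Icc 1 ⌊x⌋₊).filter (fun n => moebius n = -1)).card

noncomputable def Nzero (x : ℝ) : ℕ := ((Finset.Icc 1 ⌊x⌋₊).filter (fun n => moebius n = 0)).card

noncomputable def Qsf (x : ℝ) : ℕ := ((Finset.Icc 1 ⌊x⌋₊).filter (fun n => moebius n ≠ 0)).card

/-!
Put `F i j = μ i * μ j * ⌊x / (i * j)⌋`. Since `∑_{j ≤ y} μ j * ⌊y / j⌋ = ∑_{n ≤ y} ∑_{j ∣ n} μ j = 1`
for `y ≥ 1`, every row `∑_j F i j` with `i ≤ x` equals `μ i`. So `F` sums to `M(x)` over the square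
`[1, x]²` and to `M(√x)` over each of the strips `[1, √x] × [1, x]` and `[1, x] × [1, √x]`, while it
vanishes where both `i, j > √x`. Inclusion–exclusion on the square gives the identity.
-/

theorem Finset.sum_sum_eq_add_sub_add_sum_sum_sdiff {ι M : Type*} [AddCommGroup M]
    [DecidableEq ι] {s t : Finset ι} (h : s ⊆ t) (f : ι → ι → M) :
    ∑ i ∈ t, ∑ j ∈ t, f i j = ∑ i ∈ s, ∑ j ∈ t, f i j + ∑ i ∈ t, ∑ j ∈ s, f i j -
      ∑ i ∈ s, ∑ j ∈ s, f i j + ∑ i ∈ t \ s, ∑ j ∈ t \ s, f i j := by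
  have split (g : ι → M) : ∑ i ∈ t, g i = ∑ i ∈ s, g i + ∑ i ∈ t \ s, g i := by
    rw [add_comm, sum_sdiff h]
  simp only [split, sum_add_distrib]
  abel

theorem sum_Icc_moebius_mul_floor_div {y : ℝ} (hy : 1 ≤ y) {L : ℕ} (hL : ⌊y⌋₊ ≤ L) :
    ∑ i ∈ Icc 1 L, moebius i * ⌊y / i⌋ = 1 := by
  have floor_div (i : ℕ) : ⌊y / i⌋ = ((⌊y⌋₊ / i : ℕ) : ℤ) := by
    rw [← Nat.floor_div_natCast, Int.natCast_floor_eq_floor (by positivity)]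
  have hN : 1 ≤ ⌊y⌋₊ := Nat.one_le_floor_iff _ |>.mpr hy
  calc ∑ i ∈ Icc 1 L, moebius i * ⌊y / i⌋
      = ∑ i ∈ Ioc 0 ⌊y⌋₊, moebius i * ((⌊y⌋₊ / i : ℕ) : ℤ) := by
        rw [← Icc_add_one_left_eq_Ioc, zero_add]
        simp only [floor_div]
        refine (sum_subset (Icc_subset_Icc_right hL) fun i hi hiy => ?_).symm
        simp only [mem_Icc, not_and, not_le] at hi hiy
        simp [Nat.div_eq_of_lt (hiy hi.1)]
    _ = ∑ n ∈ Ioc 0 ⌊y⌋₊, (moebius * zeta : ArithmeticFunction ℤ) n :=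
        (sum_Ioc_mul_zeta_eq_sum _ _).symm
    _ = 1 := by
        rw [moebius_mul_coe_zeta, ← Icc_add_one_left_eq_Ioc, zero_add]
        simp [one_apply, hN]

theorem sum_moebius_mul_moebius_mul_floor_div {x : ℝ} {i : ℕ} (hi : 1 ≤ i) (hix : (i : ℝ) ≤ x)
    {L : ℕ} (hL : ⌊x⌋₊ ≤ L) :
    ∑ j ∈ Icc 1 L, moebius i * moebius j * ⌊x / (i * j : ℝ)⌋ = moebius i := by
  have hi0 : (1 : ℝ) ≤ i := by exact_mod_cast hi
  have hy : 1 ≤ x / i := (one_le_div (by positivity)).mpr hix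
  have hyL : ⌊x / i⌋₊ ≤ L := (Nat.floor_mono (div_le_self (by linarith) hi0)).trans hL
  simp only [mul_assoc, ← div_div, ← mul_sum, sum_Icc_moebius_mul_floor_div hy hyL, mul_one]

theorem floor_div_mul_eq_zero_of_sqrt_lt {x : ℝ} (hx : 0 ≤ x) {i j : ℕ}
    (hi : ⌊√x⌋₊ < i) (hj : ⌊√x⌋₊ < j) : ⌊x / (i * j : ℝ)⌋ = 0 := by
  have hsi : √x < i := (Nat.floor_lt (Real.sqrt_nonneg x)).mp hi
  have hsj : √x < j := (Nat.floor_lt (Real.sqrt_nonneg x)).mp hj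
  have hxij : x < i * j := by
    calc x = √x * √x := (Real.mul_self_sqrt hx).symm
      _ < i * j := mul_lt_mul'' hsi hsj (Real.sqrt_nonneg x) (Real.sqrt_nonneg x)
  rw [Int.floor_eq_zero_iff]
  exact ⟨by positivity, (div_lt_one (by linarith [Real.sqrt_nonneg x])).mpr hxij⟩

theorem stmt0 (x : ℝ) (hx : 1 ≤ x) :
    Mertens x = 2 * Mertens (Real.sqrt x) -
      ∑ i ∈ Finset.Icc 1 ⌊Real.sqrt x⌋₊, ∑ j ∈ Finset.Icc 1 ⌊Real.sqrt x⌋₊,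
        moebius i * moebius j * ⌊x / (i * j : ℝ)⌋ := by
  set K := ⌊√x⌋₊
  set N := ⌊x⌋₊
  have hKN : Icc 1 K ⊆ Icc 1 N :=
    Icc_subset_Icc_right (Nat.floor_mono (Real.sqrt_le_self_iff.mpr (Or.inr hx)))
  have row : ∀ i ∈ Icc 1 N, ∑ j ∈ Icc 1 N, moebius i * moebius j * ⌊x / (i * j : ℝ)⌋ =
      moebius i := fun i hi =>
    sum_moebius_mul_moebius_mul_floor_div (mem_Icc.mp hi).1
      ((Nat.le_floor_iff (by linarith)).mp (mem_Icc.mp hi).2) le_rfl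
  have full : ∑ i ∈ Icc 1 N, ∑ j ∈ Icc 1 N, moebius i * moebius j * ⌊x / (i * j : ℝ)⌋ =
      Mertens x := sum_congr rfl row
  have strip : ∑ i ∈ Icc 1 K, ∑ j ∈ Icc 1 N, moebius i * moebius j * ⌊x / (i * j : ℝ)⌋ =
      Mertens √x := sum_congr rfl fun i hi => row i (hKN hi)
  have strip' : ∑ i ∈ Icc 1 N, ∑ j ∈ Icc 1 K, moebius i * moebius j * ⌊x / (i * j : ℝ)⌋ =
      Mertens √x := by
    rw [sum_comm, ← strip]
    refine sum_congr rfl fun i _ => sum_congr rfl fun j _ => ?_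
    rw [mul_comm (j : ℝ)]
    ring
  have corner : ∑ i ∈ Icc 1 N \ Icc 1 K, ∑ j ∈ Icc 1 N \ Icc 1 K,
      moebius i * moebius j * ⌊x / (i * j : ℝ)⌋ = 0 := by
    refine sum_eq_zero fun i hi => sum_eq_zero fun j hj => ?_
    simp only [mem_sdiff, mem_Icc, not_and, not_le] at hi hj
    rw [floor_div_mul_eq_zero_of_sqrt_lt (by linarith) (hi.2 hi.1.1) (hj.2 hj.1.1), mul_zero]
  rw [← full, sum_sum_eq_add_sub_add_sum_sum_sdiff hKN, strip, strip', corner]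
  ring
end

section
/- For every real x ≥ 0, the number of integers n with 1 ≤ n ≤ ⌊x⌋ and μ(n) = 0 equals −Σ_{i=2}^{⌊√x⌋} μ(i)·⌊x/i²⌋. -/
open ArithmeticFunction Finset

/-!
Writing `n = b² a` with `a` squarefree, `d² ∣ n` holds exactly when `d ∣ b`, so
`∑_{d² ∣ n} μ(d) = ∑_{d ∣ b} μ(d)` is `1` if `n` is squarefree and `0` otherwise. Removing the
term `d = 1` gives `-[μ(n) = 0]`; summing over `n ≤ x` and exchanging the sums, each `d` is
counted once per multiple of `d²` up to `x`, i.e. `⌊x / d²⌋` times, and only `d ≤ √x` occur.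
-/

open scoped ArithmeticFunction.Moebius

theorem Nat.sq_dvd_sq_mul_iff_dvd {a b d : ℕ} (ha : Squarefree a) (hb : b ≠ 0) :
    d ^ 2 ∣ b ^ 2 * a ↔ d ∣ b := by
  refine ⟨fun h => ?_, fun h => dvd_mul_of_dvd_left (pow_dvd_pow_of_dvd h 2) a⟩
  have hba : b ^ 2 * a ≠ 0 := mul_ne_zero (pow_ne_zero 2 hb) ha.ne_zero
  have hd : d ≠ 0 := by rintro rfl; simp_all
  rw [← Nat.factorization_le_iff_dvd hd hb]
  intro p
  have hp := (Nat.factorization_le_iff_dvd (pow_ne_zero 2 hd) hba).mpr h p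
  have ha1 := ha.natFactorization_le_one p
  simp only [Nat.factorization_mul (pow_ne_zero 2 hb) ha.ne_zero, Nat.factorization_pow,
    Finsupp.coe_add, Finsupp.coe_smul, Pi.add_apply, Pi.smul_apply, smul_eq_mul] at hp
  omega

theorem sum_Icc_filter_sq_dvd_moebius {n K : ℕ} (hn : n ≠ 0) (hK : n.sqrt ≤ K) :
    ∑ d ∈ Icc 1 K with d ^ 2 ∣ n, μ d = if Squarefree n then 1 else 0 := by
  obtain ⟨a, b, -, hb, rfl, ha⟩ := Nat.sq_mul_squarefree_of_pos (Nat.pos_of_ne_zero hn)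
  have hfilter : {d ∈ Icc 1 K | d ^ 2 ∣ b ^ 2 * a} = b.divisors := by
    ext d
    simp only [mem_filter, mem_Icc, Nat.mem_divisors, Nat.sq_dvd_sq_mul_iff_dvd ha hb.ne']
    refine ⟨fun h => ⟨h.2, hb.ne'⟩, fun ⟨hdb, _⟩ => ⟨⟨Nat.pos_of_dvd_of_pos hdb hb, ?_⟩, hdb⟩⟩
    refine le_trans (Nat.le_sqrt'.mpr ?_) hK
    exact Nat.le_of_dvd (Nat.pos_of_ne_zero hn) (dvd_mul_of_dvd_left (pow_dvd_pow_of_dvd hdb 2) a)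
  have hsq : Squarefree (b ^ 2 * a) ↔ b = 1 := by
    refine ⟨fun h => Nat.isUnit_iff.mp (h b ⟨a, by ring⟩), ?_⟩
    rintro rfl
    simpa using ha
  rw [hfilter, ← coe_mul_zeta_apply, moebius_mul_coe_zeta, one_apply]
  exact if_congr hsq.symm rfl rfl

theorem sum_Icc_two_filter_sq_dvd_moebius {n K : ℕ} (hn : n ≠ 0) (hK : n.sqrt ≤ K) :
    ∑ d ∈ Icc 2 K with d ^ 2 ∣ n, μ d = -if μ n = 0 then 1 else 0 := by
  have hK1 : 1 ≤ K := le_trans (Nat.sqrt_pos.mpr (Nat.pos_of_ne_zero hn)) hK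
  have h := sum_Icc_filter_sq_dvd_moebius hn hK
  rw [← insert_Icc_add_one_left_eq_Icc hK1, filter_insert, one_pow, if_pos (one_dvd n),
    sum_insert (by simp), moebius_apply_one] at h
  rw [show 2 = 1 + 1 from rfl, eq_sub_of_add_eq' h]
  by_cases hsq : Squarefree n <;> simp [hsq]

theorem card_filter_moebius_eq_zero (N : ℕ) :
    (#{n ∈ Icc 1 N | μ n = 0} : ℤ) = -∑ d ∈ Icc 2 N.sqrt, μ d * (N / d ^ 2 : ℕ) := by
  calc (#{n ∈ Icc 1 N | μ n = 0} : ℤ)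
      = ∑ n ∈ Icc 1 N, if μ n = 0 then 1 else 0 := by push_cast [card_filter]; rfl
    _ = -∑ n ∈ Icc 1 N, ∑ d ∈ Icc 2 N.sqrt with d ^ 2 ∣ n, μ d := by
      rw [← sum_neg_distrib]
      refine sum_congr rfl fun n hn => ?_
      rw [mem_Icc] at hn
      rw [sum_Icc_two_filter_sq_dvd_moebius (by omega) (Nat.sqrt_le_sqrt hn.2), neg_neg]
    _ = -∑ d ∈ Icc 2 N.sqrt, ∑ n ∈ Icc 1 N with d ^ 2 ∣ n, μ d := by
      rw [sum_comm' (t' := Icc 2 N.sqrt) (s' := fun d => {n ∈ Icc 1 N | d ^ 2 ∣ n})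
        fun n d => by simp only [mem_filter]; tauto]
    _ = -∑ d ∈ Icc 2 N.sqrt, μ d * (N / d ^ 2 : ℕ) := by
      have hIcc : Icc 1 N = Ioc 0 N := Icc_add_one_left_eq_Ioc 0 N
      simp only [sum_const, hIcc, Nat.Ioc_filter_dvd_card_eq_div, nsmul_eq_mul, mul_comm]

theorem Nat.floor_real_sqrt_eq_sqrt_floor {x : ℝ} (hx : 0 ≤ x) : ⌊√x⌋₊ = Nat.sqrt ⌊x⌋₊ :=
  eq_of_forall_le_iff fun d => by
    rw [Nat.le_floor_iff (Real.sqrt_nonneg x), Real.le_sqrt (Nat.cast_nonneg d) hx, Nat.le_sqrt',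
      Nat.le_floor_iff hx, Nat.cast_pow]

theorem Int.floor_div_natCast_eq_natFloor_div {K : Type*} [Field K] [LinearOrder K]
    [IsOrderedRing K] [FloorRing K] {x : K} (hx : 0 ≤ x) (m : ℕ) :
    ⌊x / m⌋ = ((⌊x⌋₊ / m : ℕ) : ℤ) := by
  rw [← Nat.floor_div_natCast, Int.natCast_floor_eq_floor (by positivity)]

theorem stmt1 (x : ℝ) (hx : 0 ≤ x) :
    (Nzero x : ℤ) = -∑ i ∈ Finset.Icc 2 ⌊Real.sqrt x⌋₊, moebius i * ⌊x / (i ^ 2 : ℝ)⌋ := by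
  rw [Nzero, card_filter_moebius_eq_zero, Nat.floor_real_sqrt_eq_sqrt_floor hx]
  refine congrArg Neg.neg (sum_congr rfl fun i _ => ?_)
  rw [← Nat.cast_pow, Int.floor_div_natCast_eq_natFloor_div hx]
end

section
/- For every integer x ≥ 2, μ(x) = −Σ_{i=1}^{⌊√x⌋} Σ_{j=1}^{⌊√x⌋} μ(i)·μ(j)·[i·j divides x], where [i·j divides x] is 1 if i·j divides x and 0 otherwise. -/
open ArithmeticFunction Finset

/-! Over the full square `[1, x]²` the double sum is `Σ_{i ∣ x} μ(i) Σ_{j ∣ x/i} μ(j) = μ(x)`, and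
for each `i < x` its row `Σ_{j ≤ x} μ(i) μ(j) [ij ∣ x]` vanishes. Split `[1, x] = A ∪ B` at `√x`.
The block `B × B` contributes nothing since `ij > x` there, and by symmetry the blocks `A × B` and
`B × A` agree; as the rows indexed by `A` vanish, `A × B = -(A × A)`. Hence
`μ(x) = A × A + 2 (A × B) = -(A × A)`. -/

theorem Finset.sum_sum_add_sum_sum_of_symm {α M : Type*} [AddCommMonoid M] [DecidableEq α]
    {s t : Finset α} (hst : s ⊆ t) {f : α → α → M} (hf : ∀ i j, f i j = f j i)
    (hf₀ : ∀ i ∈ t \ s, ∀ j ∈ t \ s, f i j = 0) :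
    ∑ i ∈ t, ∑ j ∈ t, f i j + ∑ i ∈ s, ∑ j ∈ s, f i j = 2 • ∑ i ∈ s, ∑ j ∈ t, f i j := by
  have hrow : ∀ i, ∑ j ∈ t, f i j = ∑ j ∈ t \ s, f i j + ∑ j ∈ s, f i j :=
    fun i => (sum_sdiff hst).symm
  have hcorner : ∑ i ∈ t \ s, ∑ j ∈ t, f i j = ∑ i ∈ s, ∑ j ∈ t \ s, f i j := by
    simp_rw [hrow, sum_add_distrib]
    rw [sum_eq_zero fun i hi => sum_eq_zero (hf₀ i hi), zero_add, sum_comm]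
    simp_rw [hf]
  calc ∑ i ∈ t, ∑ j ∈ t, f i j + ∑ i ∈ s, ∑ j ∈ s, f i j
      = ∑ i ∈ s, ∑ j ∈ t, f i j + (∑ i ∈ s, ∑ j ∈ t \ s, f i j + ∑ i ∈ s, ∑ j ∈ s, f i j) := by
        rw [← sum_sdiff hst, hcorner, add_comm (∑ i ∈ s, ∑ j ∈ t \ s, f i j), add_assoc]
    _ = 2 • ∑ i ∈ s, ∑ j ∈ t, f i j := by
        rw [← sum_add_distrib, two_nsmul]
        simp_rw [← hrow]

theorem sum_divisors_moebius (n : ℕ) : ∑ d ∈ n.divisors, moebius d = if n = 1 then 1 else 0 := by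
  simpa only [coe_mul_zeta_apply, one_apply] using
    congrArg (fun f : ArithmeticFunction ℤ => f n) moebius_mul_coe_zeta

theorem sum_Icc_moebius_mul_ite_dvd {n N : ℕ} (hn : n ≠ 0) (hN : n ≤ N) :
    ∑ j ∈ Icc 1 N, moebius j * (if j ∣ n then 1 else 0) = if n = 1 then 1 else 0 := by
  have hsub : n.divisors ⊆ Icc 1 N := fun d hd => by
    have hdn := Nat.dvd_of_mem_divisors hd
    exact mem_Icc.mpr ⟨Nat.pos_of_mem_divisors hd, (Nat.le_of_dvd (by omega) hdn).trans hN⟩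
  rw [← sum_subset hsub fun d _ hd => by
      rw [if_neg fun h => hd (Nat.mem_divisors.mpr ⟨h, hn⟩), mul_zero],
    ← sum_divisors_moebius]
  exact sum_congr rfl fun d hd => by rw [if_pos (Nat.dvd_of_mem_divisors hd), mul_one]

theorem sum_Icc_moebius_mul_moebius_mul_ite_dvd {x N : ℕ} (hx : x ≠ 0) (hN : x ≤ N) (i : ℕ) :
    ∑ j ∈ Icc 1 N, moebius i * moebius j * (if i * j ∣ x then 1 else 0) =
      if i = x then moebius x else 0 := by
  by_cases hi : i ∣ x
  · obtain ⟨k, rfl⟩ := hi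
    have hi₀ : 0 < i := Nat.pos_of_ne_zero (left_ne_zero_of_mul hx)
    have hk : k ≠ 0 := right_ne_zero_of_mul hx
    simp_rw [Nat.mul_dvd_mul_iff_left hi₀, mul_assoc, ← mul_sum,
      sum_Icc_moebius_mul_ite_dvd hk ((Nat.le_mul_of_pos_left k hi₀).trans hN),
      eq_comm (a := i), Nat.mul_eq_left hi₀.ne']
    split_ifs with h <;> simp [h]
  · rw [if_neg fun h => hi (by rw [h])]
    exact sum_eq_zero fun j _ => by rw [if_neg fun h => hi (dvd_of_mul_right_dvd h), mul_zero]

theorem not_mul_dvd_of_sqrt_lt {x i j : ℕ} (hx : x ≠ 0) (hi : Nat.sqrt x < i) (hj : Nat.sqrt x < j) :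
    ¬ i * j ∣ x := fun h =>
  (Nat.le_of_dvd (Nat.pos_of_ne_zero hx) h).not_gt <|
    (Nat.lt_succ_sqrt x).trans_le (Nat.mul_le_mul hi hj)

theorem stmt8 (x : ℕ) (hx : 2 ≤ x) :
    moebius x = -∑ i ∈ Finset.Icc 1 (Nat.sqrt x), ∑ j ∈ Finset.Icc 1 (Nat.sqrt x),
      moebius i * moebius j * (if (i * j) ∣ x then 1 else 0) := by
  have hx₀ : x ≠ 0 := by omega
  have hsqrt : Nat.sqrt x < x := Nat.sqrt_lt_self (by omega)
  have hsplit := sum_sum_add_sum_sum_of_symm (s := Icc 1 (Nat.sqrt x)) (t := Icc 1 x)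
    (Icc_subset_Icc_right hsqrt.le)
    (f := fun i j => moebius i * moebius j * (if i * j ∣ x then 1 else (0 : ℤ)))
    (fun i j => by rw [mul_comm i, mul_comm (moebius i)])
    (fun i hi j hj => by
      simp only [mem_sdiff, mem_Icc, not_and, not_le] at hi hj
      rw [if_neg (not_mul_dvd_of_sqrt_lt hx₀ (hi.2 hi.1.1) (hj.2 hj.1.1)), mul_zero])
  simp only [sum_Icc_moebius_mul_moebius_mul_ite_dvd hx₀ le_rfl] at hsplit
  rw [sum_ite_eq', if_pos (mem_Icc.mpr ⟨by omega, le_rfl⟩),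
    sum_eq_zero fun i hi => if_neg ((mem_Icc.mp hi).2.trans_lt hsqrt).ne, smul_zero] at hsplit
  exact eq_neg_of_add_eq_zero_left hsplit
end

section
/- For every integer x ≥ 1, the Mertens function satisfies M(x) = 2 − Σ_{k=1}^{x} Σ_{i=1}^{⌊√k⌋} Σ_{j=1}^{⌊√k⌋} μ(i)·μ(j)·[i·j divides k], where [i·j divides k] is 1 if i·j divides k and 0 otherwise. -/
open ArithmeticFunction Finset

open scoped ArithmeticFunction.Moebius

/-! Fix `k ≥ 1`, put `s = ⌊√k⌋` and sum `F i j = μ i μ j [ij ∣ k]` over blocks of `[1, k]²`.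
Over the whole square the sum is `Σ_{i ∣ k} μ i Σ_{j ∣ k/i} μ j = μ k`; over the rows `i ≤ s` it is
`Σ_{i ≤ s} μ i [i = k] = [k = 1]`; and the block `i, j > s` vanishes because there `ij > k`.
Since `F` is symmetric, the block `i, j ≤ s` is therefore `2 [k = 1] - μ k`; summing over `k ≤ x`
gives the identity. -/

theorem Finset.sum_sum_eq_two_nsmul_sub_of_symm {ι M : Type*} [DecidableEq ι] [AddCommGroup M]
    {s t : Finset ι} (hst : Disjoint s t) (F : ι → ι → M) (hF : ∀ i j, F i j = F j i)
    (hcorner : ∀ i ∈ t, ∀ j ∈ t, F i j = 0) :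
    ∑ i ∈ s, ∑ j ∈ s, F i j =
      2 • ∑ i ∈ s, ∑ j ∈ s ∪ t, F i j - ∑ i ∈ s ∪ t, ∑ j ∈ s ∪ t, F i j := by
  have hts : ∑ i ∈ t, ∑ j ∈ s, F i j = ∑ i ∈ s, ∑ j ∈ t, F i j := by
    rw [sum_comm]
    exact sum_congr rfl fun i _ => sum_congr rfl fun j _ => hF j i
  have htt : ∑ i ∈ t, ∑ j ∈ t, F i j = 0 :=
    sum_eq_zero fun i hi => sum_eq_zero fun j hj => hcorner i hi j hj
  simp only [sum_union hst, sum_add_distrib, hts, htt]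
  abel

theorem sum_moebius_divisors (n : ℕ) : ∑ d ∈ n.divisors, (μ d : ℤ) = if n = 1 then 1 else 0 := by
  rw [← coe_zeta_mul_apply, coe_zeta_mul_moebius, one_apply]

theorem sum_Icc_moebius_mul_dvd {i k : ℕ} (hk : 0 < k) :
    ∑ j ∈ Icc 1 k, (μ j : ℤ) * (if i * j ∣ k then 1 else 0) = if i = k then 1 else 0 := by
  simp_rw [mul_ite, mul_one, mul_zero]
  rw [← sum_filter]
  by_cases hik : i ∣ k
  · obtain ⟨m, rfl⟩ := hik
    have hi : 0 < i := Nat.pos_of_mul_pos_right hk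
    have hm : 0 < m := Nat.pos_of_mul_pos_left hk
    have hfilter : {j ∈ Icc 1 (i * m) | i * j ∣ i * m} = m.divisors := by
      ext j
      simp only [mem_filter, mem_Icc, Nat.mem_divisors, Nat.mul_dvd_mul_iff_left hi]
      constructor
      · rintro ⟨-, h⟩
        exact ⟨h, hm.ne'⟩
      · rintro ⟨h, -⟩
        exact ⟨⟨Nat.pos_of_dvd_of_pos h hm,
          (Nat.le_of_dvd hm h).trans (Nat.le_mul_of_pos_left m hi)⟩, h⟩
    rw [hfilter, sum_moebius_divisors]
    simp_rw [eq_comm (a := i), Nat.mul_eq_left hi.ne']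
  · have hempty : {j ∈ Icc 1 k | i * j ∣ k} = ∅ :=
      filter_false_of_mem fun j _ h => hik (dvd_of_mul_right_dvd h)
    rw [hempty, sum_empty, if_neg]
    rintro rfl
    exact hik dvd_rfl

theorem sum_sqrt_moebius_mul_dvd {k : ℕ} (hk : 0 < k) :
    ∑ i ∈ Icc 1 (Nat.sqrt k), ∑ j ∈ Icc 1 (Nat.sqrt k),
        (μ i : ℤ) * μ j * (if i * j ∣ k then 1 else 0) = (if k = 1 then 2 else 0) - μ k := by
  set s := Nat.sqrt k
  set F : ℕ → ℕ → ℤ := fun i j => μ i * μ j * (if i * j ∣ k then 1 else 0)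
  have hunion : Icc 1 s ∪ Ioc s k = Icc 1 k := by
    ext a
    have := Nat.sqrt_le_self k
    simp only [mem_union, mem_Icc, mem_Ioc]
    omega
  have hdisj : Disjoint (Icc 1 s) (Ioc s k) := by
    rw [disjoint_left]
    intro a ha ha'
    simp only [mem_Icc, mem_Ioc] at ha ha'
    omega
  have hrow (I : Finset ℕ) : ∑ i ∈ I, ∑ j ∈ Icc 1 k, F i j = if k ∈ I then (μ k : ℤ) else 0 := by
    simp only [F]
    simp_rw [mul_assoc, ← mul_sum, sum_Icc_moebius_mul_dvd hk, mul_ite, mul_one, mul_zero]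
    exact sum_ite_eq' I k _
  have hcorner : ∀ i ∈ Ioc s k, ∀ j ∈ Ioc s k, F i j = 0 := by
    intro i hi j hj
    have hij : k < i * j :=
      (Nat.lt_succ_sqrt k).trans_le (Nat.mul_le_mul (mem_Ioc.1 hi).1 (mem_Ioc.1 hj).1)
    simp [F, Nat.not_dvd_of_pos_of_lt hk hij]
  have hk_mem : k ∈ Icc 1 s ↔ k = 1 := by
    rw [mem_Icc]
    constructor
    · rintro ⟨-, h⟩
      by_contra hne
      exact (Nat.sqrt_lt_self (by omega)).not_ge h
    · rintro rfl
      simp [s]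
  rw [sum_sum_eq_two_nsmul_sub_of_symm hdisj F
    (fun i j => by simp only [F, mul_comm i j, mul_comm (μ i : ℤ)]) hcorner, hunion, hrow, hrow]
  simp only [hk_mem, mem_Icc, le_refl, and_true, Nat.one_le_iff_ne_zero.2 hk.ne', if_true]
  split_ifs with h
  · subst h; simp
  · simp

theorem stmt9 (x : ℕ) (hx : 1 ≤ x) :
    (∑ k ∈ Finset.Icc 1 x, moebius k) =
      2 - ∑ k ∈ Finset.Icc 1 x, ∑ i ∈ Finset.Icc 1 (Nat.sqrt k), ∑ j ∈ Finset.Icc 1 (Nat.sqrt k),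
        moebius i * moebius j * (if (i * j) ∣ k then 1 else 0) := by
  rw [sum_congr rfl fun k hk => sum_sqrt_moebius_mul_dvd (mem_Icc.1 hk).1, sum_sub_distrib,
    sum_ite_eq', if_pos (mem_Icc.2 ⟨le_rfl, hx⟩), sub_sub_cancel]
end
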